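/- The set Γ of ℕ×ℕ matrices A with entries in a commutative ring k, such that the set of entries {A_{i,j}} is finite and there exists a natural number n_A such that every row and every column of A has at most n_A non-zero entries, forms a k-algebra under matrix addition and matrix multiplication (matrix multiplication being well-defined since each sum ∑_j A_{i,j}B_{j,l} has only finitely many non-zero terms). -/

import Mathlib

/-!
Write `E_A` for the entry set of `A` and `n_A` for its row and column bound.
Entrywise operations `f (A i j) (B i j)` with `f 0 0 = 0` take their entries in the finite set
`image2 f E_A E_B` and support every row and column inside the union of the corresponding supports
of `A` and `B`. For the product, entry `(i, l)` is a sum of at most `n_A` products of entries, so it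
lies in the finite set `n_A • insert 0 (E_A * E_B)`; row `i` of the product is supported in the
union, over the at most `n_A` indices `j` supporting row `i` of `A`, of the supports of row `j`
of `B`, which has at most `n_A * n_B` elements, and symmetrically for columns.
-/

/-- `Gamma k A` : the ℕ×ℕ matrix `A` over `k` has a finite set of entries
and there is a uniform bound `n` on the number of non-zero entries in each
row and in each column. -/
def Gamma (k : Type*) [CommRing k] (A : ℕ → ℕ → k) : Prop :=
  {x : k | ∃ i j, A i j = x}.Finite ∧
    ∃ n : ℕ, (∀ i, {j | A i j ≠ 0}.encard ≤ n) ∧ (∀ j, {i | A i j ≠ 0}.encard ≤ n)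

open Function Set Pointwise

lemma Set.Finite.nsmul {M : Type*} [AddMonoid M] {s : Set M} (hs : s.Finite) :
    ∀ n : ℕ, (n • s).Finite
  | 0 => by simpa only [zero_nsmul] using finite_zero
  | n + 1 => by simpa only [succ_nsmul] using (hs.nsmul n).add hs

lemma Set.finsetSum_mem_nsmul {ι M : Type*} [AddCommMonoid M] {P : Set M} (h0 : 0 ∈ P)
    {s : Finset ι} {n : ℕ} (hs : s.card ≤ n) {f : ι → M} (hf : ∀ i ∈ s, f i ∈ P) :
    ∑ i ∈ s, f i ∈ n • P := by
  have hsum : ∑ i ∈ s, f i ∈ s.card • P := by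
    simpa only [Finset.sum_const] using finsetSum_mem_finsetSum s (fun _ => P) f hf
  exact nsmul_subset_nsmul_right h0 hs hsum

lemma Set.encard_biUnion_le_mul {ι α : Type*} {s : Set ι} {t : ι → Set α} {n : ℕ} {m : ℕ∞}
    (hs : s.encard ≤ n) (ht : ∀ i ∈ s, (t i).encard ≤ m) :
    (⋃ i ∈ s, t i).encard ≤ n * m := by
  have hfin : s.Finite := finite_of_encard_le_coe hs
  calc (⋃ i ∈ s, t i).encard ≤ ∑ i ∈ hfin.toFinset, (t i).encard := by
        simpa using hfin.toFinset.set_encard_biUnion_le t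
    _ ≤ hfin.toFinset.card • m := Finset.sum_le_card_nsmul _ _ _ (by simpa using ht)
    _ ≤ n * m := by
        rw [nsmul_eq_mul]
        gcongr
        exact_mod_cast hfin.encard_eq_coe_toFinset_card ▸ hs

section support

variable {ι α R : Type*} [NonUnitalNonAssocSemiring R]

lemma support_finsum_mul_subset_left (a : ι → R) (B : ι → α → R) :
    support (fun l => ∑ᶠ j, a j * B j l) ⊆ ⋃ j ∈ support a, support (B j) := by
  intro l hl
  obtain ⟨j, hj⟩ : ∃ j, a j * B j l ≠ 0 := by
    by_contra! h
    exact hl (finsum_eq_zero_of_forall_eq_zero h)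
  exact mem_biUnion (left_ne_zero_of_mul hj) (right_ne_zero_of_mul hj)

lemma support_finsum_mul_subset_right (A : α → ι → R) (b : ι → R) :
    support (fun i => ∑ᶠ j, A i j * b j) ⊆ ⋃ j ∈ support b, support (A · j) := by
  intro i hi
  obtain ⟨j, hj⟩ : ∃ j, A i j * b j ≠ 0 := by
    by_contra! h
    exact hi (finsum_eq_zero_of_forall_eq_zero h)
  exact mem_biUnion (right_ne_zero_of_mul hj) (left_ne_zero_of_mul hj)

end support

namespace Gamma

variable {k : Type*} [CommRing k] {A B : ℕ → ℕ → k}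

theorem zero : Gamma k (fun _ _ => 0) :=
  ⟨(finite_singleton 0).subset (by rintro _ ⟨_, _, rfl⟩; rfl), 0, by simp, by simp⟩

theorem one : Gamma k (fun i j => if i = j then 1 else 0) := by
  refine ⟨((finite_singleton 0).insert 1).subset ?_, 1, fun i => ?_, fun j => ?_⟩
  · rintro _ ⟨i, j, rfl⟩
    dsimp only
    split_ifs <;> simp
  · simpa using encard_le_one_iff.2 fun a b ha hb => ha.1.symm.trans hb.1
  · simpa using encard_le_one_iff.2 fun a b ha hb => ha.1.trans hb.1.symm

theorem map₂ (f : k → k → k) (hf : f 0 0 = 0) (hA : Gamma k A) (hB : Gamma k B) :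
    Gamma k (fun i j => f (A i j) (B i j)) := by
  obtain ⟨hEA, nA, hArow, hAcol⟩ := hA
  obtain ⟨hEB, nB, hBrow, hBcol⟩ := hB
  have hsupp : ∀ {a b : ℕ → k}, {j | f (a j) (b j) ≠ 0} ⊆ {j | a j ≠ 0} ∪ {j | b j ≠ 0} := by
    intro a b j hj
    by_contra! h
    simp_all
  refine ⟨(hEA.image2 f hEB).subset ?_, nA + nB, fun i => ?_, fun j => ?_⟩
  · rintro _ ⟨i, j, rfl⟩
    exact mem_image2_of_mem ⟨i, j, rfl⟩ ⟨i, j, rfl⟩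
  · grw [hsupp, encard_union_le, hArow i, hBrow i, Nat.cast_add]
  · grw [hsupp, encard_union_le, hAcol j, hBcol j, Nat.cast_add]

theorem map (f : k → k) (hf : f 0 = 0) (hA : Gamma k A) : Gamma k (fun i j => f (A i j)) :=
  hA.map₂ (fun a _ => f a) hf hA

theorem finite_row_support (hA : Gamma k A) (i : ℕ) : {j | A i j ≠ 0}.Finite :=
  let ⟨_, _, hrow, _⟩ := hA
  finite_of_encard_le_coe (hrow i)

theorem finite_support_mul (hA : Gamma k A) (i l : ℕ) : {j | A i j * B j l ≠ 0}.Finite :=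
  (hA.finite_row_support i).subset fun _ => left_ne_zero_of_mul

theorem mul (hA : Gamma k A) (hB : Gamma k B) : Gamma k (fun i l => ∑ᶠ j, A i j * B j l) := by
  have hrow := hA.finite_row_support
  obtain ⟨hEA, nA, hArow, hAcol⟩ := hA
  obtain ⟨hEB, nB, hBrow, hBcol⟩ := hB
  refine ⟨((hEA.mul hEB).insert 0 |>.nsmul nA).subset ?_, nA * nB, fun i => ?_, fun l => ?_⟩
  · rintro _ ⟨i, l, rfl⟩
    show ∑ᶠ j, A i j * B j l ∈ _
    rw [finsum_eq_sum_of_support_subset _ (s := (hrow i).toFinset)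
      (by simpa using fun j => left_ne_zero_of_mul)]
    refine finsetSum_mem_nsmul (mem_insert 0 _) ?_ fun j _ => ?_
    · exact_mod_cast (hrow i).encard_eq_coe_toFinset_card ▸ hArow i
    · exact mem_insert_of_mem _ (mul_mem_mul ⟨i, j, rfl⟩ ⟨j, l, rfl⟩)
  · grw [Nat.cast_mul, ← encard_biUnion_le_mul (hArow i) fun j _ => hBrow j]
    exact encard_mono (support_finsum_mul_subset_left (A i) B)
  · grw [Nat.cast_mul, mul_comm, ← encard_biUnion_le_mul (hBcol l) fun j _ => hAcol j]
    exact encard_mono (support_finsum_mul_subset_right A (B · l))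

end Gamma

/-- The set Γ of ℕ×ℕ matrices with finite entry set and uniformly bounded number
of non-zero entries in each row and column forms a `k`-algebra under matrix
addition and matrix multiplication; in particular the sums
`∑ j, A i j * B j l` defining the product have only finitely many non-zero terms. -/
theorem gamma_is_algebra (k : Type*) [CommRing k] :
    -- contains the zero matrix and the identity matrix
    Gamma k (fun _ _ => 0) ∧
    Gamma k (fun i j => if i = j then (1 : k) else 0) ∧
    -- closed under matrix addition, negation, and scalar multiplication
    (∀ A B, Gamma k A → Gamma k B → Gamma k (fun i j => A i j + B i j)) ∧
    (∀ A, Gamma k A → Gamma k (fun i j => - A i j)) ∧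
    (∀ (c : k) (A), Gamma k A → Gamma k (fun i j => c * A i j)) ∧
    -- matrix multiplication is well defined and Γ is closed under it
    (∀ A B, Gamma k A → Gamma k B →
      (∀ i l, {j | A i j * B j l ≠ 0}.Finite) ∧
      Gamma k (fun i l => ∑ᶠ j, A i j * B j l)) :=
  ⟨.zero, .one, fun _ _ hA hB => hA.map₂ (· + ·) (add_zero 0) hB, fun _ hA => hA.map (-·) neg_zero,
    fun c _ hA => hA.map (c * ·) (mul_zero c), fun _ _ hA hB => ⟨hA.finite_support_mul, hA.mul hB⟩⟩
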